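/- (Lemma 3.2, estimate (3.1): parabolic rescaling for caps, conditional on the inductive hypothesis.) Let p₀ = 13/4, let ε > 0, C_ε > 0, R > 1, and let K be an integer with 1 ≤ K ≤ R. Suppose that for every radius r with 1 ≤ r < R, every ball B' of radius r in ℝ³, and every bounded measurable g on S one has ‖Eg‖_{L^{p₀}(B')} ≤ C_ε r^{ε} ‖g‖_{L^∞(S)}. Then there is an absolute constant C such that for every cap τ and every bounded measurable f on S, ‖Ef_τ‖_{L^{p₀}(B(R))} ≤ C C_ε K^{-2 + 4/p₀} R^{ε} ‖f_τ‖_{L^∞(S)}. -/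

import Mathlib

/-!
The hyperbolic paraboloid is invariant under parabolic rescaling: substituting
`ξ = c_τ + η / K` (with `c_τ` the centre of the cap `τ`) turns the phase `x · (ξ₁, ξ₂, ξ₁ξ₂)`
into a constant plus `Ax · (η₁, η₂, η₁η₂)` for an explicit linear map `A` with `det A = K⁻⁴`.
Hence `|Ef_τ(x)| = |Eg(Ax)|` for a function `g` on `S` with `‖g‖_∞ ≤ 2K⁻² ‖f_τ‖_∞`.
Changing variables `y = Ax` costs a factor `K^{4/p}`, and `A` maps `B(R)` into the cube
`[-4R, 4R]³`, which is covered by `17³` balls of radius `(R + 1) / 2 ∈ [1, R)`, where the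
inductive hypothesis applies. The powers of `K` combine to `K^{-2 + 4/p}`.
-/

open MeasureTheory Real
open scoped ENNReal RealInnerProductSpace

noncomputable section

/-- Euclidean `ℝ³`. -/
abbrev E3 := EuclideanSpace ℝ (Fin 3)

/-- The closed unit disk `D(1)` in `ℝ²`, the parameter domain of the compact piece
`S = {(ξ₁,ξ₂,ξ₁ξ₂) : (ξ₁,ξ₂) ∈ D(1)}` of the hyperbolic paraboloid. -/
def D1 : Set (ℝ × ℝ) := Metric.closedBall 0 1

/-- Surface-measure density (Jacobian) of the graph map `(ξ₁,ξ₂) ↦ (ξ₁,ξ₂,ξ₁ξ₂)`. -/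
def surfJ (ξ : ℝ × ℝ) : ℝ := Real.sqrt (1 + ξ.1 ^ 2 + ξ.2 ^ 2)

/-- The surface measure `dσ` of `S`, realized on the parameter disk `D(1)`
(`L^p(S,dσ)` norms of functions on `S` are `L^p(σS)` norms in graph coordinates). -/
def σS : Measure (ℝ × ℝ) :=
  (volume.restrict D1).withDensity fun ξ => ENNReal.ofReal (surfJ ξ)

/-- The extension (adjoint restriction) operator `Ef(x) = ∫_S e^{ix·ξ} f(ξ) dσ(ξ)`
of the hyperbolic paraboloid piece `S`, in graph coordinates. -/
def extOp (f : ℝ × ℝ → ℂ) (x : E3) : ℂ :=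
  ∫ ξ, Complex.exp (Complex.I * ((x 0 * ξ.1 + x 1 * ξ.2 + x 2 * (ξ.1 * ξ.2) : ℝ) : ℂ)) * f ξ ∂σS

/-- Index set: integer pairs `(a,b)` with `|a|,|b| ≤ n`. -/
def sqIdx (n : ℕ) : Finset (ℤ × ℤ) :=
  (Finset.Icc (-(n : ℤ)) n) ×ˢ (Finset.Icc (-(n : ℤ)) n)

/-- The square of the axis-parallel grid of side `1/K` with index `(a,b)`:
the projection `τ̄` to `D(1)` of the cap `τ`. -/
def capSq (K : ℕ) (ab : ℤ × ℤ) : Set (ℝ × ℝ) :=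
  Set.Ico ((ab.1 : ℝ) / K) ((ab.1 + 1 : ℝ) / K) ×ˢ
    Set.Ico ((ab.2 : ℝ) / K) ((ab.2 + 1 : ℝ) / K)

/-- Indices of all grid squares of side `1/K` meeting the unit disk. -/
def capIdx (K : ℕ) : Finset (ℤ × ℤ) := sqIdx (K + 1)

/-- The piece `f_τ = f·χ_τ` of `f` on the cap `τ` with index `ab`. -/
def capPiece (K : ℕ) (ab : ℤ × ℤ) (f : ℝ × ℝ → ℂ) : ℝ × ℝ → ℂ :=
  (capSq K ab).indicator f

/-- Axis-parallel grid strip of width `1/K`: for `d = true` the strip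
`c/K ≤ ξ₁ < (c+1)/K` (parallel to `e₂`); for `d = false` the strip
`c/K ≤ ξ₂ < (c+1)/K` (parallel to `e₁`). -/
def stripSet (K : ℕ) (d : Bool) (c : ℤ) : Set (ℝ × ℝ) :=
  if d then {ξ | (c : ℝ) / K ≤ ξ.1 ∧ ξ.1 < (c + 1 : ℝ) / K}
  else {ξ | (c : ℝ) / K ≤ ξ.2 ∧ ξ.2 < (c + 1 : ℝ) / K}

/-- Indices of the grid strips of width `1/K` meeting the unit disk. -/
def stripIdx (K : ℕ) : Finset ℤ := Finset.Icc (-(K : ℤ) - 1) ((K : ℤ) + 1)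

open Classical in
/-- `Σ_{τ : τ̄ ∩ L ≠ ∅} Eg_τ(x)`, for a decomposition `(g_τ)_τ` into cap pieces. -/
def stripSum (K : ℕ) (g : ℤ × ℤ → ℝ × ℝ → ℂ) (L : Set (ℝ × ℝ)) (x : E3) : ℂ :=
  ∑ ab ∈ (capIdx K).filter (fun ab => (capSq K ab ∩ L).Nonempty), extOp (g ab) x

/-- `x` is an `α`-broad point of `Ef` relative to the decomposition of `f` into the
cap pieces `(g_τ)_τ`:
`max_τ |Eg_τ(x)| + max_L |Σ_{τ : τ̄∩L≠∅} Eg_τ(x)| ≤ α |Ef(x)|`. -/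
def broadPtD (K : ℕ) (α : ℝ) (g : ℤ × ℤ → ℝ × ℝ → ℂ) (f : ℝ × ℝ → ℂ) (x : E3) : Prop :=
  ∀ ab ∈ capIdx K, ∀ d : Bool, ∀ c ∈ stripIdx K,
    ‖extOp (g ab) x‖ + ‖stripSum K g (stripSet K d c) x‖
      ≤ α * ‖extOp f x‖

open Classical in
/-- The `α`-broad function `B_α[Ef]` relative to the cap decomposition `(g_τ)_τ`:
it equals `Ef(x)` at `α`-broad points and `0` elsewhere. -/
def broadFnD (K : ℕ) (α : ℝ) (g : ℤ × ℤ → ℝ × ℝ → ℂ) (f : ℝ × ℝ → ℂ) (x : E3) : ℂ :=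
  if broadPtD K α g f x then extOp f x else 0

/-- The `α`-broad function `B_α[Ef]`, with the standard cap pieces `f_τ = f·χ_τ`. -/
def broadFn (K : ℕ) (α : ℝ) (f : ℝ × ℝ → ℂ) : E3 → ℂ :=
  broadFnD K α (fun ab => capPiece K ab f) f

section Lattice

variable {ι : Type*} [Fintype ι]

def latticePt (ρ : ℝ) (v : ι → ℤ) : EuclideanSpace ℝ ι := WithLp.toLp 2 fun i => ρ * v i

theorem exists_int_abs_le_abs_sub_mul_le {ρ : ℝ} (hρ : 0 < ρ) {N : ℕ} {t : ℝ}
    (ht : |t| ≤ N * ρ) : ∃ n : ℤ, |n| ≤ N ∧ |t - ρ * n| ≤ ρ / 2 := by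
  have hround := abs_sub_round (t / ρ)
  refine ⟨round (t / ρ), ?_, ?_⟩
  · have htρ : |t / ρ| ≤ N := by rwa [abs_div, abs_of_pos hρ, div_le_iff₀ hρ]
    have hdiff := abs_sub_abs_le_abs_sub (round (t / ρ) : ℝ) (t / ρ)
    rw [abs_sub_comm] at hdiff
    have : |(round (t / ρ) : ℝ)| < N + 1 := by linarith
    exact Int.lt_add_one_iff.mp (by exact_mod_cast this)
  · calc |t - ρ * round (t / ρ)| = ρ * |t / ρ - round (t / ρ)| := by
          rw [← abs_of_pos hρ, ← abs_mul, abs_of_pos hρ, mul_sub, mul_div_cancel₀ _ hρ.ne']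
      _ ≤ ρ / 2 := by linarith [mul_le_mul_of_nonneg_left hround hρ.le]

theorem exists_latticePt_dist_le [DecidableEq ι] {ρ : ℝ} (hρ : 0 < ρ) {N : ℕ}
    {y : EuclideanSpace ℝ ι} (hy : ∀ i, |y i| ≤ N * ρ) :
    ∃ v ∈ Fintype.piFinset fun _ : ι => Finset.Icc (-(N : ℤ)) N,
      dist y (latticePt ρ v) ≤ √(Fintype.card ι) * (ρ / 2) := by
  choose v hvN hv using fun i => exists_int_abs_le_abs_sub_mul_le hρ (hy i)
  refine ⟨v, Fintype.mem_piFinset.2 fun i => Finset.mem_Icc.2 (abs_le.1 (hvN i)), ?_⟩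
  rw [EuclideanSpace.dist_eq, ← Real.sqrt_sq (by positivity : 0 ≤ ρ / 2), ← Real.sqrt_mul
    (Nat.cast_nonneg _)]
  refine Real.sqrt_le_sqrt ?_
  calc ∑ i, dist (y i) (latticePt ρ v i) ^ 2 ≤ ∑ _i : ι, (ρ / 2) ^ 2 := by
        refine Finset.sum_le_sum fun i _ => ?_
        rw [Real.dist_eq]
        exact pow_le_pow_left₀ (abs_nonneg _) (hv i) 2
    _ = Fintype.card ι * (ρ / 2) ^ 2 := by simp

end Lattice

theorem lintegral_biUnion_finset_le {α ι : Type*} [MeasurableSpace α] {μ : Measure α}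
    (s : Finset ι) (t : ι → Set α) (f : α → ℝ≥0∞) :
    ∫⁻ x in ⋃ i ∈ s, t i, f x ∂μ ≤ ∑ i ∈ s, ∫⁻ x in t i, f x ∂μ := by
  classical
  induction s using Finset.induction with
  | empty => simp
  | insert i s hi ih =>
    rw [Finset.set_biUnion_insert, Finset.sum_insert hi]
    exact (lintegral_union_le _ _ _).trans (add_le_add le_rfl ih)

theorem eLpNorm_restrict_biUnion_le {α ι E : Type*} [MeasurableSpace α] [NormedAddCommGroup E]
    {μ : Measure α} {p : ℝ≥0∞} (hp0 : p ≠ 0) (hp : p ≠ ∞) (f : α → E) (s : Finset ι)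
    (t : ι → Set α) {C : ℝ≥0∞} (hC : ∀ i ∈ s, eLpNorm f p (μ.restrict (t i)) ≤ C) :
    eLpNorm f p (μ.restrict (⋃ i ∈ s, t i)) ≤ (s.card : ℝ≥0∞) ^ (1 / p.toReal) * C := by
  have hp_pos : 0 < p.toReal := ENNReal.toReal_pos hp0 hp
  simp only [eLpNorm_eq_lintegral_rpow_enorm_toReal hp0 hp] at hC ⊢
  have hC' : ∀ i ∈ s, ∫⁻ x in t i, ‖f x‖ₑ ^ p.toReal ∂μ ≤ C ^ p.toReal := fun i hi => by
    simpa [← ENNReal.rpow_mul, hp_pos.ne'] using ENNReal.rpow_le_rpow (hC i hi) hp_pos.le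
  calc (∫⁻ x in ⋃ i ∈ s, t i, ‖f x‖ₑ ^ p.toReal ∂μ) ^ (1 / p.toReal)
      ≤ (∑ i ∈ s, C ^ p.toReal) ^ (1 / p.toReal) := by
        gcongr
        exact (lintegral_biUnion_finset_le s t _).trans (Finset.sum_le_sum hC')
    _ = (s.card : ℝ≥0∞) ^ (1 / p.toReal) * C := by
        rw [Finset.sum_const, nsmul_eq_mul, ENNReal.mul_rpow_of_nonneg _ _ (by positivity),
          ← ENNReal.rpow_mul, mul_one_div_cancel hp_pos.ne', ENNReal.rpow_one]

theorem eLpNorm_comp_linearMap_restrict_preimage {E F : Type*} [NormedAddCommGroup E]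
    [InnerProductSpace ℝ E] [FiniteDimensional ℝ E] [MeasurableSpace E] [BorelSpace E]
    [NormedAddCommGroup F] {p : ℝ≥0∞} (hp : p ≠ ∞) {A : E →ₗ[ℝ] E} (hA : LinearMap.det A ≠ 0)
    {h : E → F} (hh : Continuous h) {U : Set E} (hU : MeasurableSet U) :
    eLpNorm (h ∘ A) p (volume.restrict (A ⁻¹' U))
      = ENNReal.ofReal |(LinearMap.det A)⁻¹| ^ (1 / p.toReal)
          * eLpNorm h p (volume.restrict U) := by
  have hAm : Measurable A := A.continuous_of_finiteDimensional.measurable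
  rw [← eLpNorm_map_measure hh.aestronglyMeasurable hAm.aemeasurable, ← Measure.restrict_map hAm hU,
    Measure.map_linearMap_addHaar_eq_smul_addHaar volume hA, Measure.restrict_smul,
    eLpNorm_smul_measure_of_ne_top hp, smul_eq_mul, ENNReal.toReal_div, ENNReal.toReal_one]

section SurfaceMeasure

theorem measurableSet_D1 : MeasurableSet D1 := measurableSet_closedBall

theorem one_le_surfJ (ξ : ℝ × ℝ) : 1 ≤ surfJ ξ :=
  Real.one_le_sqrt.2 (by nlinarith [sq_nonneg ξ.1, sq_nonneg ξ.2])

theorem surfJ_le_two {ξ : ℝ × ℝ} (hξ : ξ ∈ D1) : surfJ ξ ≤ 2 := by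
  have h : ‖ξ‖ ≤ 1 := by simpa [D1] using hξ
  have h1 : |ξ.1| ≤ 1 := (norm_fst_le ξ).trans h
  have h2 : |ξ.2| ≤ 1 := (norm_snd_le ξ).trans h
  rw [surfJ, Real.sqrt_le_left (by norm_num)]
  nlinarith [sq_abs ξ.1, sq_abs ξ.2, abs_nonneg ξ.1, abs_nonneg ξ.2]

@[fun_prop]
theorem continuous_surfJ : Continuous surfJ := by
  unfold surfJ; fun_prop

theorem surfJ_pos (ξ : ℝ × ℝ) : 0 < surfJ ξ := zero_lt_one.trans_le (one_le_surfJ ξ)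

instance : IsFiniteMeasure σS :=
  isFiniteMeasure_withDensity_ofReal
    (continuous_surfJ.continuousOn.integrableOn_compact (isCompact_closedBall 0 1)).2

theorem σS_absolutelyContinuous_volume : σS ≪ volume :=
  (withDensity_absolutelyContinuous _ _).trans Measure.restrict_le_self.absolutelyContinuous

theorem ae_σS_iff {P : ℝ × ℝ → Prop} : (∀ᵐ ξ ∂σS, P ξ) ↔ ∀ᵐ ξ ∂volume.restrict D1, P ξ := by
  rw [σS, ae_withDensity_iff (by fun_prop)]
  simp [surfJ_pos]

theorem volume_restrict_D1_absolutelyContinuous_σS : volume.restrict D1 ≪ σS :=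
  withDensity_absolutelyContinuous' (by fun_prop) (ae_of_all _ fun ξ => by simp [surfJ_pos])

theorem integral_σS (h : ℝ × ℝ → ℂ) :
    ∫ ξ, h ξ ∂σS = ∫ ξ, D1.indicator (fun ξ => (surfJ ξ : ℂ) * h ξ) ξ := by
  rw [σS, integral_withDensity_eq_integral_toReal_smul (by fun_prop)
    (ae_of_all _ fun _ => ENNReal.ofReal_lt_top), integral_indicator measurableSet_D1]
  simp [ENNReal.toReal_ofReal (surfJ_pos _).le, Complex.real_smul]

end SurfaceMeasure

section Extension

def extPhase (x : E3) (ξ : ℝ × ℝ) : ℝ := x 0 * ξ.1 + x 1 * ξ.2 + x 2 * (ξ.1 * ξ.2)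

def surfDensity (f : ℝ × ℝ → ℂ) : ℝ × ℝ → ℂ := D1.indicator fun ξ => (surfJ ξ : ℂ) * f ξ

theorem extOp_eq_integral_surfDensity (f : ℝ × ℝ → ℂ) (x : E3) :
    extOp f x = ∫ ξ, Complex.exp (Complex.I * extPhase x ξ) * surfDensity f ξ := by
  rw [extOp, integral_σS]
  congr 1 with ξ
  by_cases hξ : ξ ∈ D1
  · simp only [surfDensity, extPhase, Set.indicator_of_mem hξ]; ring
  · simp only [surfDensity, Set.indicator_of_notMem hξ, mul_zero]

theorem norm_exp_I_mul_ofReal (r : ℝ) : ‖Complex.exp (Complex.I * r)‖ = 1 := by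
  rw [mul_comm, Complex.norm_exp_ofReal_mul_I]

theorem continuous_extOp {g : ℝ × ℝ → ℂ} (hg : Integrable g σS) : Continuous (extOp g) := by
  refine continuous_of_dominated (bound := fun ξ => ‖g ξ‖) (fun x => ?_)
    (fun x => ae_of_all _ fun ξ => ?_) hg.norm (ae_of_all _ fun ξ => ?_)
  · exact (Continuous.aestronglyMeasurable (by fun_prop)).mul hg.1
  · rw [norm_mul, norm_exp_I_mul_ofReal, one_mul]
  · fun_prop

end Extension

section Rescaling

variable (K : ℕ) (ab : ℤ × ℤ)

theorem measurableSet_capSq : MeasurableSet (capSq K ab) :=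
  measurableSet_Ico.prod measurableSet_Ico

def capCenter : ℝ × ℝ := (((ab.1 : ℝ) + 1 / 2) / K, ((ab.2 : ℝ) + 1 / 2) / K)

def capChart (η : ℝ × ℝ) : ℝ × ℝ := capCenter K ab + (K : ℝ)⁻¹ • η

def rescaleMap : E3 →ₗ[ℝ] E3 :=
  Matrix.toEuclideanLin !![(K : ℝ)⁻¹, 0, (capCenter K ab).2 / K;
    0, (K : ℝ)⁻¹, (capCenter K ab).1 / K;
    0, 0, ((K : ℝ) ^ 2)⁻¹]

-- `K⁻²` is the Jacobian of `capChart`, and `surfJ (capChart K ab η) / surfJ η` converts the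
-- surface measure at `capChart K ab η` into the one at `η`.
def rescaledPiece (f : ℝ × ℝ → ℂ) (η : ℝ × ℝ) : ℂ :=
  (((K : ℝ) ^ 2)⁻¹ * (surfJ (capChart K ab η) / surfJ η) : ℝ) *
    D1.indicator (capPiece K ab f) (capChart K ab η)

theorem rescaleMap_apply_zero (x : E3) :
    rescaleMap K ab x 0 = (K : ℝ)⁻¹ * x 0 + (capCenter K ab).2 / K * x 2 := by
  simp [rescaleMap, Matrix.mulVec, dotProduct, Fin.sum_univ_three]

theorem rescaleMap_apply_one (x : E3) :
    rescaleMap K ab x 1 = (K : ℝ)⁻¹ * x 1 + (capCenter K ab).1 / K * x 2 := by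
  simp [rescaleMap, Matrix.mulVec, dotProduct, Fin.sum_univ_three]

theorem rescaleMap_apply_two (x : E3) : rescaleMap K ab x 2 = ((K : ℝ) ^ 2)⁻¹ * x 2 := by
  simp [rescaleMap, Matrix.mulVec, dotProduct, Fin.sum_univ_three]

theorem det_rescaleMap : LinearMap.det (rescaleMap K ab) = ((K : ℝ) ^ 4)⁻¹ := by
  rw [rescaleMap, LinearMap.det_toLpLin, Matrix.det_fin_three]
  simp only [Matrix.of_apply, Matrix.cons_val', Matrix.cons_val_zero, Matrix.cons_val_one,
    Matrix.cons_val, Matrix.cons_val_fin_one]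
  ring

theorem extPhase_capChart (x : E3) (η : ℝ × ℝ) :
    extPhase x (capChart K ab η)
      = extPhase x (capCenter K ab) + extPhase (rescaleMap K ab x) η := by
  simp only [extPhase, rescaleMap_apply_zero, rescaleMap_apply_one, rescaleMap_apply_two,
    capChart, Prod.fst_add, Prod.snd_add, Prod.smul_fst, Prod.smul_snd, smul_eq_mul]
  ring

variable {K}

theorem integral_comp_capChart (hK : 0 < K) (F : ℝ × ℝ → ℂ) :
    ∫ η, F (capChart K ab η) = (K : ℝ) ^ 2 • ∫ ξ, F ξ := by
  simp only [capChart]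
  rw [Measure.integral_comp_smul volume (fun ξ => F (capCenter K ab + ξ)),
    integral_add_left_eq_self]
  simp [Module.finrank_prod, abs_of_pos (show (0 : ℝ) < K by exact_mod_cast hK)]

theorem quasiMeasurePreserving_capChart (hK : 0 < K) :
    Measure.QuasiMeasurePreserving (capChart K ab) volume volume :=
  (measurePreserving_add_left volume (capCenter K ab)).quasiMeasurePreserving.comp
    (Measure.quasiMeasurePreserving_smul volume (by positivity))

theorem mem_D1_of_capChart_mem_capSq (hK : 0 < K) {η : ℝ × ℝ}
    (h : capChart K ab η ∈ capSq K ab) : η ∈ D1 := by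
  have hK0 : (0 : ℝ) < K := by exact_mod_cast hK
  obtain ⟨⟨h1, h2⟩, h3, h4⟩ := h
  simp only [capChart, capCenter, Prod.fst_add, Prod.snd_add, Prod.smul_fst, Prod.smul_snd,
    smul_eq_mul] at h1 h2 h3 h4
  field_simp at h1 h2 h3 h4
  simp only [D1, Metric.mem_closedBall, dist_zero_right, Prod.norm_def, Real.norm_eq_abs]
  exact max_le (abs_le.2 ⟨by linarith, by linarith⟩) (abs_le.2 ⟨by linarith, by linarith⟩)

theorem surfDensity_rescaledPiece (hK : 0 < K) (f : ℝ × ℝ → ℂ) (η : ℝ × ℝ) :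
    surfDensity (rescaledPiece K ab f) η
      = ((K : ℂ) ^ 2)⁻¹ * surfDensity (capPiece K ab f) (capChart K ab η) := by
  by_cases hD : capChart K ab η ∈ D1
  swap
  · simp [surfDensity, rescaledPiece, hD]
  by_cases hS : capChart K ab η ∈ capSq K ab
  swap
  · by_cases hη : η ∈ D1 <;> simp [surfDensity, rescaledPiece, capPiece, hη, hD, hS]
  have hη := mem_D1_of_capChart_mem_capSq ab hK hS
  have hJ : (surfJ η : ℂ) ≠ 0 := by exact_mod_cast (surfJ_pos η).ne'
  simp only [surfDensity, rescaledPiece, capPiece, Set.indicator_of_mem hη,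
    Set.indicator_of_mem hD, Set.indicator_of_mem hS]
  push_cast
  field_simp

theorem extOp_capPiece_eq (hK : 0 < K) (f : ℝ × ℝ → ℂ) (x : E3) :
    extOp (capPiece K ab f) x
      = Complex.exp (Complex.I * extPhase x (capCenter K ab))
          * extOp (rescaledPiece K ab f) (rescaleMap K ab x) := by
  have hK0 : (K : ℂ) ^ 2 ≠ 0 := pow_ne_zero 2 (Nat.cast_ne_zero.2 hK.ne')
  simp only [extOp_eq_integral_surfDensity, surfDensity_rescaledPiece ab hK]
  set F := fun ξ => Complex.exp (Complex.I * extPhase x ξ) * surfDensity (capPiece K ab f) ξ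
  have hF := integral_comp_capChart ab hK F
  rw [Complex.real_smul, Complex.ofReal_pow, Complex.ofReal_natCast] at hF
  calc ∫ ξ, F ξ = ((K : ℂ) ^ 2)⁻¹ * ∫ η, F (capChart K ab η) := by
        rw [hF, inv_mul_cancel_left₀ hK0]
    _ = _ := by
        rw [← integral_const_mul, ← integral_const_mul]
        congr 1 with η
        simp only [F, extPhase_capChart, Complex.ofReal_add, mul_add, Complex.exp_add]
        ring

theorem enorm_rescaledPiece_le (f : ℝ × ℝ → ℂ) (η : ℝ × ℝ) :
    ‖rescaledPiece K ab f η‖ₑ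
      ≤ ENNReal.ofReal (2 / K ^ 2) * ‖D1.indicator (capPiece K ab f) (capChart K ab η)‖ₑ := by
  by_cases hD : capChart K ab η ∈ D1
  swap
  · simp [rescaledPiece, hD]
  have hw : ((K : ℝ) ^ 2)⁻¹ * (surfJ (capChart K ab η) / surfJ η) ≤ 2 / K ^ 2 := by
    rw [div_eq_mul_inv 2, mul_comm 2]
    gcongr
    rw [div_le_iff₀ (surfJ_pos η)]
    linarith [surfJ_le_two hD, one_le_surfJ η]
  rw [rescaledPiece, enorm_mul, ← ofReal_norm, Complex.norm_real, Real.norm_of_nonneg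
    (by have := surfJ_pos η; have := surfJ_pos (capChart K ab η); positivity)]
  gcongr

theorem eLpNorm_rescaledPiece_le (hK : 0 < K) (f : ℝ × ℝ → ℂ) :
    eLpNorm (rescaledPiece K ab f) ⊤ σS
      ≤ ENNReal.ofReal (2 / K ^ 2) * eLpNorm (capPiece K ab f) ⊤ σS := by
  have hσ : ∀ᵐ ξ ∂σS, ‖capPiece K ab f ξ‖ₑ ≤ eLpNorm (capPiece K ab f) ⊤ σS := by
    rw [eLpNorm_exponent_top]; exact ae_le_eLpNormEssSup
  rw [ae_σS_iff, ae_restrict_iff' measurableSet_D1] at hσ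
  have hvol : ∀ᵐ ξ ∂volume,
      ‖D1.indicator (capPiece K ab f) ξ‖ₑ ≤ eLpNorm (capPiece K ab f) ⊤ σS := by
    filter_upwards [hσ] with ξ hξ
    by_cases hD : ξ ∈ D1
    · simpa [hD] using hξ hD
    · simp [hD]
  rw [eLpNorm_exponent_top]
  refine eLpNormEssSup_le_of_ae_enorm_bound (σS_absolutelyContinuous_volume.ae_le ?_)
  filter_upwards [(quasiMeasurePreserving_capChart ab hK).ae hvol] with η hη
  exact (enorm_rescaledPiece_le ab f η).trans (by gcongr)

theorem aestronglyMeasurable_rescaledPiece (hK : 0 < K) {f : ℝ × ℝ → ℂ}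
    (hf : AEStronglyMeasurable f σS) : AEStronglyMeasurable (rescaledPiece K ab f) σS := by
  have hind : AEStronglyMeasurable (D1.indicator (capPiece K ab f)) volume :=
    (aestronglyMeasurable_indicator_iff measurableSet_D1).2
      ((hf.indicator (measurableSet_capSq K ab)).mono_ac volume_restrict_D1_absolutelyContinuous_σS)
  have hchart : Continuous (capChart K ab) := by unfold capChart; fun_prop
  have hweight : Continuous fun η =>
      ((((K : ℝ) ^ 2)⁻¹ * (surfJ (capChart K ab η) / surfJ η) : ℝ) : ℂ) :=
    Complex.continuous_ofReal.comp (continuous_const.mul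
      ((continuous_surfJ.comp hchart).div continuous_surfJ fun η => (surfJ_pos η).ne'))
  exact (hweight.aestronglyMeasurable.mul
    (hind.comp_quasiMeasurePreserving (quasiMeasurePreserving_capChart ab hK))).mono_ac
      σS_absolutelyContinuous_volume

theorem memLp_rescaledPiece (hK : 0 < K) {f : ℝ × ℝ → ℂ} (hf : MemLp f ⊤ σS) :
    MemLp (rescaledPiece K ab f) ⊤ σS :=
  ⟨aestronglyMeasurable_rescaledPiece ab hK hf.1, (eLpNorm_rescaledPiece_le ab hK f).trans_lt
    (ENNReal.mul_lt_top ENNReal.ofReal_lt_top (hf.indicator (measurableSet_capSq K ab)).2)⟩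

end Rescaling

section Covering

variable {K : ℕ} {ab : ℤ × ℤ}

theorem norm_capCenter_le (hK : 0 < K) (hab : ab ∈ capIdx K) : ‖capCenter K ab‖ ≤ 3 := by
  have hK1 : (1 : ℝ) ≤ K := by exact_mod_cast hK
  have bound : ∀ a : ℤ, -(K + 1 : ℤ) ≤ a → a ≤ K + 1 → ‖((a : ℝ) + 1 / 2) / K‖ ≤ 3 := by
    intro a h1 h2
    have h1' : -((K : ℝ) + 1) ≤ a := by exact_mod_cast h1
    have h2' : (a : ℝ) ≤ K + 1 := by exact_mod_cast h2
    rw [Real.norm_eq_abs, abs_div, Nat.abs_cast, div_le_iff₀ (by linarith), abs_le]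
    constructor <;> linarith
  simp only [capIdx, sqIdx, Finset.mem_product, Finset.mem_Icc] at hab
  exact max_le (bound _ (by exact_mod_cast hab.1.1) (by exact_mod_cast hab.1.2))
    (bound _ (by exact_mod_cast hab.2.1) (by exact_mod_cast hab.2.2))

theorem abs_rescaleMap_apply_le (hK : 0 < K) (hab : ab ∈ capIdx K) {R : ℝ} {x : E3}
    (hx : ‖x‖ ≤ R) (i : Fin 3) : |rescaleMap K ab x i| ≤ 4 * R := by
  have hK1 : (1 : ℝ) ≤ K := by exact_mod_cast hK
  have hKinv : |(K : ℝ)⁻¹| ≤ 1 := by rw [abs_inv, Nat.abs_cast]; exact inv_le_one_of_one_le₀ hK1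
  have hc : ∀ t : ℝ, ‖t‖ ≤ ‖capCenter K ab‖ → |t / K| ≤ 3 := fun t ht => by
    rw [Real.norm_eq_abs] at ht
    rw [abs_div, Nat.abs_cast]
    exact (div_le_self (abs_nonneg t) hK1).trans (ht.trans (norm_capCenter_le hK hab))
  have hxj : ∀ j, |x j| ≤ R := fun j => (PiLp.norm_apply_le x j).trans hx
  have hR : 0 ≤ R := (abs_nonneg _).trans (hxj 0)
  have hcomb : ∀ {s t u v : ℝ}, |s| ≤ 1 → |t| ≤ 3 → |u| ≤ R → |v| ≤ R → |s * u + t * v| ≤ 4 * R :=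
    fun {s t u v} hs ht hu hv => calc
      _ ≤ |s| * |u| + |t| * |v| := (abs_add_le _ _).trans_eq (by rw [abs_mul, abs_mul])
      _ ≤ 1 * R + 3 * R := by gcongr
      _ = 4 * R := by ring
  match i with
  | 0 =>
    rw [rescaleMap_apply_zero]
    exact hcomb hKinv (hc _ (norm_snd_le _)) (hxj 0) (hxj 2)
  | 1 =>
    rw [rescaleMap_apply_one]
    exact hcomb hKinv (hc _ (norm_fst_le _)) (hxj 1) (hxj 2)
  | 2 =>
    have hK2 : |((K : ℝ) ^ 2)⁻¹| ≤ 1 := by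
      rw [abs_inv, abs_pow, Nat.abs_cast]; exact inv_le_one_of_one_le₀ (one_le_pow₀ hK1)
    rw [rescaleMap_apply_two, abs_mul]
    nlinarith [abs_nonneg ((K : ℝ) ^ 2)⁻¹, abs_nonneg (x 2), hxj 2]

theorem eLpNorm_comp_rescaleMap_le {p : ℝ≥0∞} (hp0 : p ≠ 0) (hp : p ≠ ∞) (hK : 0 < K)
    (hab : ab ∈ capIdx K) {R r : ℝ} (hR : 0 < R) (hr : R / 2 ≤ r) {h : E3 → ℂ}
    (hh : Continuous h) {B : ℝ≥0∞}
    (hB : ∀ c, eLpNorm h p (volume.restrict (Metric.closedBall c r)) ≤ B) :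
    eLpNorm (h ∘ rescaleMap K ab) p (volume.restrict (Metric.closedBall 0 R))
      ≤ ENNReal.ofReal ((K : ℝ) ^ 4) ^ (1 / p.toReal) * (4913 ^ (1 / p.toReal) * B) := by
  set S := Fintype.piFinset fun _ : Fin 3 => Finset.Icc (-8 : ℤ) 8
  set U := ⋃ v ∈ S, Metric.closedBall (latticePt (R / 2) v) r
  have hcover : Metric.closedBall 0 R ⊆ rescaleMap K ab ⁻¹' U := by
    intro x hx
    obtain ⟨v, hv, hdist⟩ := exists_latticePt_dist_le (N := 8) (half_pos hR) fun i =>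
      (abs_rescaleMap_apply_le hK hab (mem_closedBall_zero_iff.1 hx) i).trans_eq (by ring)
    have hsqrt : √(Fintype.card (Fin 3) : ℝ) ≤ 2 := by
      rw [Fintype.card_fin, Real.sqrt_le_left zero_le_two]; norm_num
    exact Set.mem_biUnion hv (Metric.mem_closedBall.2 (hdist.trans (by nlinarith)))
  have hdet : LinearMap.det (rescaleMap K ab) ≠ 0 := by rw [det_rescaleMap]; positivity
  calc eLpNorm (h ∘ rescaleMap K ab) p (volume.restrict (Metric.closedBall 0 R))
      ≤ eLpNorm (h ∘ rescaleMap K ab) p (volume.restrict (rescaleMap K ab ⁻¹' U)) :=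
        eLpNorm_mono_measure _ (Measure.restrict_mono hcover le_rfl)
    _ = ENNReal.ofReal |(LinearMap.det (rescaleMap K ab))⁻¹| ^ (1 / p.toReal)
          * eLpNorm h p (volume.restrict U) :=
        eLpNorm_comp_linearMap_restrict_preimage hp hdet hh
          (Finset.measurableSet_biUnion _ fun _ _ => measurableSet_closedBall)
    _ ≤ _ := by
        rw [det_rescaleMap, inv_inv, abs_of_pos (by positivity)]
        gcongr
        refine (eLpNorm_restrict_biUnion_le hp0 hp h S _ fun v _ => hB _).trans_eq ?_
        simp [S]

end Covering

theorem ofReal_rescaling_factors_eq {K : ℕ} (hK : 0 < K) {q a : ℝ} (hq : 0 ≤ q) (ha : 0 ≤ a)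
    (M : ℝ≥0∞) :
    ENNReal.ofReal ((K : ℝ) ^ 4) ^ q
        * (4913 ^ q * (ENNReal.ofReal a * (ENNReal.ofReal (2 / K ^ 2) * M)))
      = ENNReal.ofReal (2 * 4913 ^ q * a * (K : ℝ) ^ (4 * q - 2)) * M := by
  have hK0 : (0 : ℝ) < K := by exact_mod_cast hK
  have hKpow : ((K : ℝ) ^ 4) ^ q * (2 / K ^ 2) = 2 * (K : ℝ) ^ (4 * q - 2) := by
    rw [← Real.rpow_natCast, ← Real.rpow_mul hK0.le, Real.rpow_sub hK0, Real.rpow_two]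
    push_cast
    ring
  rw [← ENNReal.ofReal_ofNat 4913, ENNReal.ofReal_rpow_of_nonneg (by positivity) hq,
    ENNReal.ofReal_rpow_of_nonneg (by norm_num) hq, ← mul_assoc, ← mul_assoc, ← mul_assoc,
    ← ENNReal.ofReal_mul (by positivity), ← ENNReal.ofReal_mul (by positivity),
    ← ENNReal.ofReal_mul (by positivity)]
  congr 2
  linear_combination (4913 ^ q * a) * hKpow

theorem parabolic_rescaling_caps :
    ∃ C : ℝ, 0 < C ∧
      ∀ ε Cε R : ℝ, 0 < ε → 0 < Cε → 1 < R → ∀ K : ℕ, 1 ≤ K → (K : ℝ) ≤ R →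
        (∀ r : ℝ, 1 ≤ r → r < R → ∀ c : E3, ∀ g : ℝ × ℝ → ℂ, MemLp g ⊤ σS →
            eLpNorm (extOp g) (ENNReal.ofReal (13 / 4))
                (volume.restrict (Metric.closedBall c r))
              ≤ ENNReal.ofReal (Cε * r ^ ε) * eLpNorm g ⊤ σS) →
        ∀ ab ∈ capIdx K, ∀ f : ℝ × ℝ → ℂ, MemLp f ⊤ σS →
          eLpNorm (extOp (capPiece K ab f)) (ENNReal.ofReal (13 / 4))
              (volume.restrict (Metric.closedBall (0 : E3) R))
            ≤ ENNReal.ofReal (C * Cε * (K : ℝ) ^ (-2 + 4 / (13 / 4) : ℝ) * R ^ ε) *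
                eLpNorm (capPiece K ab f) ⊤ σS := by
  refine ⟨2 * 4913 ^ (4 / 13 : ℝ), by positivity, ?_⟩
  intro ε Cε R hε hCε hR K hK _ hyp ab hab f hf
  have hp : (ENNReal.ofReal (13 / 4)).toReal = 13 / 4 := ENNReal.toReal_ofReal (by norm_num)
  set g := rescaledPiece K ab f
  have hball : ∀ c, eLpNorm (extOp g) (ENNReal.ofReal (13 / 4))
      (volume.restrict (Metric.closedBall c ((R + 1) / 2)))
      ≤ ENNReal.ofReal (Cε * R ^ ε)
          * (ENNReal.ofReal (2 / K ^ 2) * eLpNorm (capPiece K ab f) ⊤ σS) :=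
    fun c => (hyp _ (by linarith) (by linarith) c g (memLp_rescaledPiece ab hK hf)).trans
      (by gcongr; exacts [by linarith, eLpNorm_rescaledPiece_le ab hK f])
  have hnorm : ∀ x, ‖extOp (capPiece K ab f) x‖ = ‖(extOp g ∘ rescaleMap K ab) x‖ := fun x => by
    rw [extOp_capPiece_eq ab hK, norm_mul, norm_exp_I_mul_ofReal, one_mul, Function.comp_apply]
  calc eLpNorm (extOp (capPiece K ab f)) (ENNReal.ofReal (13 / 4))
        (volume.restrict (Metric.closedBall (0 : E3) R))
      = eLpNorm (extOp g ∘ rescaleMap K ab) (ENNReal.ofReal (13 / 4))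
        (volume.restrict (Metric.closedBall (0 : E3) R)) :=
        eLpNorm_congr_norm_ae (ae_of_all _ hnorm)
    _ ≤ _ := eLpNorm_comp_rescaleMap_le (by norm_num) ENNReal.ofReal_ne_top hK hab (by linarith)
          (by linarith) (continuous_extOp ((memLp_rescaledPiece ab hK hf).integrable le_top)) hball
    _ = _ := by
      rw [hp, ofReal_rescaling_factors_eq hK (by norm_num) (by positivity)]
      congr 2
      norm_num
      ring
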